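/- arXiv:2410.02596 — 6 statements merged into one kernel-verified Lean document; each statement's English description precedes it below -/
import Mathlib

section
/- Let α be a nonempty finite type, let g : ℝ → ℝ be continuously differentiable, and define f₁(t) = t · ∫_1^t g'(log s)/s² ds for t > 0. Let p : α → ℝ satisfy p(x) > 0 for every x, and let q : ℝ → α → ℝ satisfy q(θ)(x) > 0 for all θ and x, with θ ↦ q(θ)(x) differentiable for each x. Then for every θ₀ ∈ ℝ, the function θ ↦ ∑_{x} q(θ)(x) · f₁(p(x)/q(θ)(x)) is differentiable at θ₀ with derivative equal to −∑_{x} g'(log(p(x)/q(θ₀)(x))) · q'(θ₀)(x), where q'(θ₀)(x) denotes the derivative of θ ↦ q(θ)(x) at θ₀; equivalently, this derivative equals ∑_{x} q(θ₀)(x) · (d/dθ)|_{θ=θ₀} g(log(p(x)/q(θ)(x))). -/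
/-! For the perspective `θ ↦ u θ * f (c / u θ)` the chain rule gives the derivative
`u' * (f t - t * f' t)` at `t = c / u θ₀`. For `f t = t * ∫_1^t g'(log s) / s²` the fundamental
theorem of calculus gives `t * f' t = f t + g'(log t)`, so the bracket collapses to `-g'(log t)`,
with no integral left. The same number is `u θ₀` times the derivative of `θ ↦ g (log (c / u θ))`,
since `log (c / u)` has derivative `-u' / u`. -/

open Real Finset

theorem hasDerivAt_integral_one_of_continuousOn_Ioi {h : ℝ → ℝ}
    (hh : ContinuousOn h (Set.Ioi 0)) {t : ℝ} (ht : 0 < t) :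
    HasDerivAt (fun t => ∫ s in (1:ℝ)..t, h s) (h t) t := by
  have hsub : Set.uIcc 1 t ⊆ Set.Ioi 0 := fun s hs => by
    rcases Set.mem_uIcc.mp hs with ⟨h1, _⟩ | ⟨h1, _⟩
    exacts [one_pos.trans_le h1, ht.trans_le h1]
  exact intervalIntegral.integral_hasDerivAt_right ((hh.mono hsub).intervalIntegrable)
    (hh.stronglyMeasurableAtFilter isOpen_Ioi t ht)
    (hh.continuousAt (isOpen_Ioi.mem_nhds ht))

theorem hasDerivAt_of_eq_mul_integral_log_div_sq {k f : ℝ → ℝ} (hk : Continuous k)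
    (hf : ∀ t > (0:ℝ), f t = t * ∫ s in (1:ℝ)..t, k (log s) / s ^ 2) {t : ℝ} (ht : 0 < t) :
    HasDerivAt f ((f t + k (log t)) / t) t := by
  have hcont : ContinuousOn (fun s => k (log s) / s ^ 2) (Set.Ioi 0) := fun s hs =>
    ((hk.continuousAt.comp (continuousAt_log hs.ne')).div
      (continuous_pow 2).continuousAt (pow_ne_zero 2 hs.ne')).continuousWithinAt
  have hfeq : f =ᶠ[nhds t] fun t => t * ∫ s in (1:ℝ)..t, k (log s) / s ^ 2 :=
    Filter.eventually_of_mem (isOpen_Ioi.mem_nhds ht) hf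
  refine (((hasDerivAt_id' t).mul (hasDerivAt_integral_one_of_continuousOn_Ioi hcont
    ht)).congr_of_eventuallyEq hfeq).congr_deriv ?_
  rw [hf t ht]
  field_simp

theorem HasDerivAt.mul_comp_const_div {f u : ℝ → ℝ} {f' u' c θ₀ : ℝ}
    (hf : HasDerivAt f f' (c / u θ₀)) (hu : HasDerivAt u u' θ₀) (hu0 : u θ₀ ≠ 0) :
    HasDerivAt (fun θ => u θ * f (c / u θ)) (u' * (f (c / u θ₀) - c / u θ₀ * f')) θ₀ := by
  refine (hu.mul (hf.comp θ₀ ((hasDerivAt_const θ₀ c).fun_div hu hu0))).congr_deriv ?_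
  rw [Function.comp_apply]
  field_simp
  ring

theorem HasDerivAt.log_const_div {u : ℝ → ℝ} {u' c θ₀ : ℝ} (hu : HasDerivAt u u' θ₀)
    (hc : c ≠ 0) (hu0 : u θ₀ ≠ 0) :
    HasDerivAt (fun θ => Real.log (c / u θ)) (-u' / u θ₀) θ₀ := by
  refine (((hasDerivAt_const θ₀ c).fun_div hu hu0).log (div_ne_zero hc hu0)).congr_deriv ?_
  field_simp
  ring

theorem stmt_0_general {α : Type*} [Fintype α]
    (g : ℝ → ℝ) (hg : ContDiff ℝ 1 g)
    (f₁ : ℝ → ℝ) (hf₁ : ∀ t > (0:ℝ), f₁ t = t * ∫ s in (1:ℝ)..t, deriv g (Real.log s) / s ^ 2)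
    (p : α → ℝ) (hp : ∀ x, 0 < p x)
    (q : ℝ → α → ℝ) (hq : ∀ θ x, 0 < q θ x)
    (hqdiff : ∀ x, Differentiable ℝ (fun θ => q θ x)) :
    ∀ θ₀ : ℝ,
      HasDerivAt (fun θ => ∑ x, q θ x * f₁ (p x / q θ x))
        (-∑ x, deriv g (Real.log (p x / q θ₀ x)) * deriv (fun θ => q θ x) θ₀) θ₀ ∧
      (-∑ x, deriv g (Real.log (p x / q θ₀ x)) * deriv (fun θ => q θ x) θ₀)
        = ∑ x, q θ₀ x * deriv (fun θ => g (Real.log (p x / q θ x))) θ₀ := by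
  intro θ₀
  have hq' (x : α) : HasDerivAt (fun θ => q θ x) (deriv (fun θ => q θ x) θ₀) θ₀ :=
    (hqdiff x θ₀).hasDerivAt
  have hterm (x : α) : HasDerivAt (fun θ => q θ x * f₁ (p x / q θ x))
      (-(deriv g (log (p x / q θ₀ x)) * deriv (fun θ => q θ x) θ₀)) θ₀ := by
    have ht := div_pos (hp x) (hq θ₀ x)
    refine ((hasDerivAt_of_eq_mul_integral_log_div_sq (hg.continuous_deriv le_rfl) hf₁
      ht).mul_comp_const_div (hq' x) (hq θ₀ x).ne').congr_deriv ?_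
    field_simp [(hp x).ne', (hq θ₀ x).ne']
    ring
  refine ⟨?_, ?_⟩
  · rw [← sum_neg_distrib]
    exact HasDerivAt.fun_sum fun x _ => hterm x
  · rw [← sum_neg_distrib]
    refine sum_congr rfl fun x _ => ?_
    have hlog := HasDerivAt.log_const_div (hq' x) (hp x).ne' (hq θ₀ x).ne'
    have hglog : HasDerivAt (fun θ => g (log (p x / q θ x)))
        (deriv g (log (p x / q θ₀ x)) * (-deriv (fun θ => q θ x) θ₀ / q θ₀ x)) θ₀ :=
      (hg.differentiable one_ne_zero _).hasDerivAt.comp θ₀ hlog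
    rw [hglog.deriv]
    field_simp [(hq θ₀ x).ne']

theorem stmt_0 {α : Type*} [Fintype α] [Nonempty α]
    (g : ℝ → ℝ) (hg : ContDiff ℝ 1 g)
    (f₁ : ℝ → ℝ) (hf₁ : ∀ t > (0:ℝ), f₁ t = t * ∫ s in (1:ℝ)..t, deriv g (Real.log s) / s ^ 2)
    (p : α → ℝ) (hp : ∀ x, 0 < p x)
    (q : ℝ → α → ℝ) (hq : ∀ θ x, 0 < q θ x)
    (hqdiff : ∀ x, Differentiable ℝ (fun θ => q θ x)) :
    ∀ θ₀ : ℝ,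
      HasDerivAt (fun θ => ∑ x, q θ x * f₁ (p x / q θ x))
        (-∑ x, deriv g (Real.log (p x / q θ₀ x)) * deriv (fun θ => q θ x) θ₀) θ₀ ∧
      (-∑ x, deriv g (Real.log (p x / q θ₀ x)) * deriv (fun θ => q θ x) θ₀)
        = ∑ x, q θ₀ x * deriv (fun θ => g (Real.log (p x / q θ x))) θ₀ :=
  stmt_0_general g hg f₁ hf₁ p hp q hq hqdiff
end

section
/- Let α be a nonempty finite type, let g : ℝ → ℝ be differentiable, and define f₃(t) = t · g(log t) for t > 0. Let p : α → ℝ satisfy p(x) > 0 for every x, and let q : ℝ → α → ℝ satisfy q(θ)(x) > 0 for all θ and x, with θ ↦ q(θ)(x) differentiable for each x. Then for every θ₀ ∈ ℝ, the function θ ↦ ∑_{x} q(θ)(x) · f₃(p(x)/q(θ)(x)) is differentiable at θ₀ with derivative equal to −∑_{x} (p(x)/q(θ₀)(x)) · g'(log(p(x)/q(θ₀)(x))) · q'(θ₀)(x), where q'(θ₀)(x) denotes the derivative of θ ↦ q(θ)(x) at θ₀; equivalently, this derivative equals ∑_{x} p(x) · (d/dθ)|_{θ=θ₀} g(log(p(x)/q(θ)(x))).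 -/
/-!
Since `f₃ t = t * g (log t)`, each summand `q θ x * f₃ (p x / q θ x)` equals
`p x * g (log (p x / q θ x))`: the divergence-type functional coincides with the regression
objective weighted by `p`, before any differentiation. Differentiating the latter term by term,
the derivative of `log (p x / q θ x)` in `θ` is `-q' / q`, which gives both forms of the derivative.
-/

open Real Finset

lemma mul_apply_div_eq_of_eq_mul_comp_log {f g : ℝ → ℝ} (hf : ∀ t > 0, f t = t * g (log t))
    {a b : ℝ} (ha : 0 < a) (hb : 0 < b) : b * f (a / b) = a * g (log (a / b)) := by
  rw [hf _ (div_pos ha hb), ← mul_assoc, mul_div_cancel₀ _ hb.ne']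

lemma hasDerivAt_comp_log_const_div {g u : ℝ → ℝ} {c u' θ : ℝ}
    (hg : DifferentiableAt ℝ g (log (c / u θ))) (hu : HasDerivAt u u' θ) (hc : c ≠ 0)
    (hθ : u θ ≠ 0) :
    HasDerivAt (fun t => g (log (c / u t))) (-(deriv g (log (c / u θ)) * u' / u θ)) θ := by
  have hlog : HasDerivAt (fun t => log (c / u t)) (-(u' / u θ)) θ := by
    convert ((hasDerivAt_const θ c).fun_div hu hθ).log (div_ne_zero hc hθ) using 1
    field_simp
    ring
  exact (hg.hasDerivAt.comp θ hlog).congr_deriv (by ring)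

theorem stmt_1_general {α : Type*} [Fintype α]
    (g : ℝ → ℝ) (hg : Differentiable ℝ g)
    (f₃ : ℝ → ℝ) (hf₃ : ∀ t > (0:ℝ), f₃ t = t * g (Real.log t))
    (p : α → ℝ) (hp : ∀ x, 0 < p x)
    (q : ℝ → α → ℝ) (hq : ∀ θ x, 0 < q θ x)
    (hqdiff : ∀ x, Differentiable ℝ (fun θ => q θ x)) :
    ∀ θ₀ : ℝ,
      HasDerivAt (fun θ => ∑ x, q θ x * f₃ (p x / q θ x))
        (-∑ x, (p x / q θ₀ x) * deriv g (Real.log (p x / q θ₀ x)) * deriv (fun θ => q θ x) θ₀) θ₀ ∧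
      (-∑ x, (p x / q θ₀ x) * deriv g (Real.log (p x / q θ₀ x)) * deriv (fun θ => q θ x) θ₀)
        = ∑ x, p x * deriv (fun θ => g (Real.log (p x / q θ x))) θ₀ := by
  intro θ₀
  have hterm : ∀ x, HasDerivAt (fun θ => p x * g (log (p x / q θ x)))
      (-(p x / q θ₀ x * deriv g (log (p x / q θ₀ x)) * deriv (fun θ => q θ x) θ₀)) θ₀ :=
    fun x => ((hasDerivAt_comp_log_const_div (hg _) (hqdiff x θ₀).hasDerivAt (hp x).ne'
      (hq θ₀ x).ne').const_mul (p x)).congr_deriv (by ring)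
  have hobjective : (fun θ => ∑ x, q θ x * f₃ (p x / q θ x))
      = fun θ => ∑ x, p x * g (log (p x / q θ x)) := by
    funext θ
    exact sum_congr rfl fun x _ => mul_apply_div_eq_of_eq_mul_comp_log hf₃ (hp x) (hq θ x)
  rw [← sum_neg_distrib]
  refine ⟨hobjective ▸ HasDerivAt.fun_sum fun x _ => hterm x, sum_congr rfl fun x _ => ?_⟩
  rw [← (hterm x).deriv, deriv_const_mul_field']

theorem stmt_1 {α : Type*} [Fintype α] [Nonempty α]
    (g : ℝ → ℝ) (hg : Differentiable ℝ g)
    (f₃ : ℝ → ℝ) (hf₃ : ∀ t > (0:ℝ), f₃ t = t * g (Real.log t))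
    (p : α → ℝ) (hp : ∀ x, 0 < p x)
    (q : ℝ → α → ℝ) (hq : ∀ θ x, 0 < q θ x)
    (hqdiff : ∀ x, Differentiable ℝ (fun θ => q θ x)) :
    ∀ θ₀ : ℝ,
      HasDerivAt (fun θ => ∑ x, q θ x * f₃ (p x / q θ x))
        (-∑ x, (p x / q θ₀ x) * deriv g (Real.log (p x / q θ₀ x)) * deriv (fun θ => q θ x) θ₀) θ₀ ∧
      (-∑ x, (p x / q θ₀ x) * deriv g (Real.log (p x / q θ₀ x)) * deriv (fun θ => q θ x) θ₀)
        = ∑ x, p x * deriv (fun θ => g (Real.log (p x / q θ x))) θ₀ :=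
  stmt_1_general g hg f₃ hf₃ p hp q hq hqdiff
end

section
/- Let α be a nonempty finite type, let g : ℝ → ℝ be continuously differentiable, and define f₄(t) = ∫_1^t g'(log s) ds for t > 0. Let q : α → ℝ satisfy q(x) > 0 for every x, and let p : ℝ → α → ℝ satisfy p(θ)(x) > 0 for all θ and x, with θ ↦ p(θ)(x) differentiable for each x. Then for every θ₀ ∈ ℝ, the function θ ↦ ∑_{x} q(x) · f₄(p(θ)(x)/q(x)) is differentiable at θ₀ with derivative equal to ∑_{x} g'(log(p(θ₀)(x)/q(x))) · p'(θ₀)(x), where p'(θ₀)(x) denotes the derivative of θ ↦ p(θ)(x) at θ₀; equivalently, this derivative equals ∑_{x} p(θ₀)(x) · (d/dθ)|_{θ=θ₀} g(log(p(θ)(x)/q(x))). -/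
open Real Finset Filter

/-! By the fundamental theorem of calculus `f₄' = g' ∘ log` on `(0, ∞)`, so the chain rule gives
`d/dθ [q · f₄(p/q)] = g'(log (p/q)) · p'`. On the other side,
`d/dθ g(log (p/q)) = g'(log (p/q)) · p'/p` (the constant `q` drops out of the logarithmic
derivative), and weighting by `p` cancels the `1/p`. -/

theorem hasDerivAt_integral_comp_log {h : ℝ → ℝ} (hh : Continuous h) {t : ℝ} (ht : 0 < t) :
    HasDerivAt (fun t => ∫ s in (1:ℝ)..t, h (log s)) (h (log t)) t := by
  have hcont : ContinuousOn (fun s => h (log s)) (Set.Ioi 0) :=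
    hh.comp_continuousOn (continuousOn_log.mono fun _ hs => ne_of_gt hs)
  have hsub : Set.uIcc 1 t ⊆ Set.Ioi 0 := fun _ hs => (lt_min one_pos ht).trans_le hs.1
  exact intervalIntegral.integral_hasDerivAt_right (hcont.mono hsub).intervalIntegrable
    (hcont.stronglyMeasurableAtFilter isOpen_Ioi t ht) (hcont.continuousAt (Ioi_mem_nhds ht))

theorem hasDerivAt_of_eq_integral_deriv_comp_log {g f : ℝ → ℝ} (hg : ContDiff ℝ 1 g)
    (hf : ∀ t > (0:ℝ), f t = ∫ s in (1:ℝ)..t, deriv g (log s)) {t : ℝ} (ht : 0 < t) :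
    HasDerivAt f (deriv g (log t)) t :=
  (hasDerivAt_integral_comp_log (hg.continuous_deriv le_rfl) ht).congr_of_eventuallyEq <|
    eventually_of_mem (Ioi_mem_nhds ht) hf

theorem HasDerivAt.const_mul_comp_div_const {φ u : ℝ → ℝ} {d u' c θ : ℝ}
    (hφ : HasDerivAt φ d (u θ / c)) (hu : HasDerivAt u u' θ) (hc : c ≠ 0) :
    HasDerivAt (fun θ => c * φ (u θ / c)) (d * u') θ := by
  rw [show d * u' = c * (d * (u' / c)) by field_simp]
  exact (hφ.comp θ (hu.div_const c)).const_mul c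

theorem hasDerivAt_comp_log_div_const {g u : ℝ → ℝ} {u' c θ : ℝ}
    (hg : DifferentiableAt ℝ g (log (u θ / c))) (hu : HasDerivAt u u' θ)
    (huθ : u θ ≠ 0) (hc : c ≠ 0) :
    HasDerivAt (fun θ => g (log (u θ / c))) (deriv g (log (u θ / c)) * (u' / u θ)) θ := by
  rw [show u' / u θ = u' / c / (u θ / c) by field_simp]
  exact hg.hasDerivAt.comp θ ((hu.div_const c).log (div_ne_zero huθ hc))

theorem stmt_2_general {α : Type*} [Fintype α]
    (g : ℝ → ℝ) (hg : ContDiff ℝ 1 g)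
    (f₄ : ℝ → ℝ) (hf₄ : ∀ t > (0:ℝ), f₄ t = ∫ s in (1:ℝ)..t, deriv g (Real.log s))
    (q : α → ℝ) (hq : ∀ x, 0 < q x)
    (p : ℝ → α → ℝ) (hp : ∀ θ x, 0 < p θ x)
    (hpdiff : ∀ x, Differentiable ℝ (fun θ => p θ x)) :
    ∀ θ₀ : ℝ,
      HasDerivAt (fun θ => ∑ x, q x * f₄ (p θ x / q x))
        (∑ x, deriv g (Real.log (p θ₀ x / q x)) * deriv (fun θ => p θ x) θ₀) θ₀ ∧
      (∑ x, deriv g (Real.log (p θ₀ x / q x)) * deriv (fun θ => p θ x) θ₀)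
        = ∑ x, p θ₀ x * deriv (fun θ => g (Real.log (p θ x / q x))) θ₀ := by
  intro θ₀
  refine ⟨HasDerivAt.fun_sum fun x _ => ?_, Finset.sum_congr rfl fun x _ => ?_⟩
  · exact (hasDerivAt_of_eq_integral_deriv_comp_log hg hf₄
      (div_pos (hp θ₀ x) (hq x))).const_mul_comp_div_const (hpdiff x θ₀).hasDerivAt (hq x).ne'
  · rw [(hasDerivAt_comp_log_div_const (hg.differentiable one_ne_zero _)
      (hpdiff x θ₀).hasDerivAt (hp θ₀ x).ne' (hq x).ne').deriv]
    field_simp [(hp θ₀ x).ne']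

theorem stmt_2 {α : Type*} [Fintype α] [Nonempty α]
    (g : ℝ → ℝ) (hg : ContDiff ℝ 1 g)
    (f₄ : ℝ → ℝ) (hf₄ : ∀ t > (0:ℝ), f₄ t = ∫ s in (1:ℝ)..t, deriv g (Real.log s))
    (q : α → ℝ) (hq : ∀ x, 0 < q x)
    (p : ℝ → α → ℝ) (hp : ∀ θ x, 0 < p θ x)
    (hpdiff : ∀ x, Differentiable ℝ (fun θ => p θ x)) :
    ∀ θ₀ : ℝ,
      HasDerivAt (fun θ => ∑ x, q x * f₄ (p θ x / q x))
        (∑ x, deriv g (Real.log (p θ₀ x / q x)) * deriv (fun θ => p θ x) θ₀) θ₀ ∧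
      (∑ x, deriv g (Real.log (p θ₀ x / q x)) * deriv (fun θ => p θ x) θ₀)
        = ∑ x, p θ₀ x * deriv (fun θ => g (Real.log (p θ x / q x))) θ₀ :=
  stmt_2_general g hg f₄ hf₄ q hq p hp hpdiff
end

section
/- Let g : ℝ → ℝ be continuously differentiable, and define f₁(t) = t · ∫_1^t g'(log s)/s² ds for t > 0. Then for every t > 0, f₁ is differentiable at t with derivative f₁'(t) = ∫_1^t g'(log s)/s² ds + g'(log t)/t, and consequently f₁(t) − t · f₁'(t) = −g'(log t). -/
/-!
Differentiating the product `t * F t`, with `F t = ∫_1^t g'(log s) / s²`, by the fundamental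
theorem of calculus gives `f₁' t = F t + t * g'(log t) / t²`, so in `f₁ t - t * f₁' t` the
terms `t * F t` cancel and `t² * g'(log t) / t² = g'(log t)` remains.
-/

open Real Set MeasureTheory

theorem HasDerivAt.id_mul_integral {h : ℝ → ℝ} {a t : ℝ}
    (hint : IntervalIntegrable h volume a t) (hmeas : StronglyMeasurableAtFilter h (nhds t))
    (hcont : ContinuousAt h t) :
    HasDerivAt (fun u => u * ∫ s in a..u, h s) ((∫ s in a..t, h s) + t * h t) t := by
  simpa only [one_mul] using
    (hasDerivAt_id' t).fun_mul (intervalIntegral.integral_hasDerivAt_right hint hmeas hcont)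

theorem continuousOn_comp_log_div_sq {φ : ℝ → ℝ} (hφ : Continuous φ) :
    ContinuousOn (fun s => φ (log s) / s ^ 2) (Ioi 0) :=
  (hφ.comp_continuousOn (continuousOn_log.mono fun _ hs => ne_of_gt hs)).div
    (continuousOn_pow 2) fun _ hs => pow_ne_zero 2 (ne_of_gt hs)

theorem uIcc_one_subset_Ioi_zero {t : ℝ} (ht : 0 < t) : uIcc 1 t ⊆ Ioi 0 :=
  fun _ hx => lt_of_lt_of_le (lt_min one_pos ht) hx.1

theorem hasDerivAt_mul_integral_comp_log_div_sq {φ : ℝ → ℝ} (hφ : Continuous φ) {t : ℝ}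
    (ht : 0 < t) :
    HasDerivAt (fun u => u * ∫ s in (1:ℝ)..u, φ (log s) / s ^ 2)
      ((∫ s in (1:ℝ)..t, φ (log s) / s ^ 2) + φ (log t) / t) t := by
  have hcont := continuousOn_comp_log_div_sq hφ
  have hderiv := HasDerivAt.id_mul_integral
    ((hcont.mono (uIcc_one_subset_Ioi_zero ht)).intervalIntegrable)
    (hcont.stronglyMeasurableAtFilter isOpen_Ioi t ht) (hcont.continuousAt (Ioi_mem_nhds ht))
  convert hderiv using 2
  field_simp

theorem stmt_3 (g : ℝ → ℝ) (hg : ContDiff ℝ 1 g)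
    (f₁ : ℝ → ℝ) (hf₁ : ∀ t > (0:ℝ), f₁ t = t * ∫ s in (1:ℝ)..t, deriv g (Real.log s) / s ^ 2) :
    ∀ t > (0:ℝ),
      HasDerivAt f₁ ((∫ s in (1:ℝ)..t, deriv g (Real.log s) / s ^ 2) + deriv g (Real.log t) / t) t ∧
      f₁ t - t * ((∫ s in (1:ℝ)..t, deriv g (Real.log s) / s ^ 2) + deriv g (Real.log t) / t)
        = -deriv g (Real.log t) := by
  intro t ht
  have hf₁_near : f₁ =ᶠ[nhds t] fun u => u * ∫ s in (1:ℝ)..u, deriv g (log s) / s ^ 2 :=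
    Filter.eventually_of_mem (Ioi_mem_nhds ht) hf₁
  have hderiv := hasDerivAt_mul_integral_comp_log_div_sq (hg.continuous_deriv le_rfl) ht
  refine ⟨hderiv.congr_of_eventuallyEq hf₁_near, ?_⟩
  rw [hf₁ t ht, mul_add, mul_div_cancel₀ _ ht.ne']
  ring
end

section
/- Let g : ℝ → ℝ be twice continuously differentiable, and define f₁(t) = t · ∫_1^t g'(log s)/s² ds for t > 0. Then: (i) f₁(1) = 0; (ii) f₁ is differentiable at 1 with f₁'(1) = g'(0); (iii) for every t > 0, f₁ is twice differentiable at t with f₁''(t) = g''(log t)/t²; and (iv) f₁ is convex on the interval (0, ∞) if and only if g is convex on ℝ. -/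
/-!
By the product rule, `f₁' t = ∫₁ᵗ g'(log s)/s² ds + g'(log t)/t`; differentiating again, the
derivative of the integral cancels one term of the quotient rule and leaves `g''(log t)/t²`.
On the open intervals `(0, ∞)` and `ℝ`, convexity of a twice differentiable function is
nonnegativity of its second derivative, and `t = exp x` matches the signs of `g''(log t)/t²`
and `g''(x)`.
-/

open Real Set Filter Topology

lemma HasDerivAt.nonneg_of_monotoneOn {s : Set ℝ} {φ : ℝ → ℝ} {x c : ℝ} (hs : IsOpen s)
    (hx : x ∈ s) (hd : HasDerivAt φ c x) (hφ : MonotoneOn φ s) : 0 ≤ c :=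
  hd.hasDerivWithinAt.nonneg_of_monotoneOn
    (by simpa using (PerfectSpace.univ_preperfect (α := ℝ)).open_inter hs x ⟨hx, mem_univ x⟩) hφ

lemma convexOn_iff_hasDerivAt2_nonneg {D : Set ℝ} (hD : Convex ℝ D) (hDo : IsOpen D)
    {f f' f'' : ℝ → ℝ} (hf : ∀ x ∈ D, HasDerivAt f (f' x) x)
    (hf' : ∀ x ∈ D, HasDerivAt f' (f'' x) x) :
    ConvexOn ℝ D f ↔ ∀ x ∈ D, 0 ≤ f'' x := by
  constructor
  · intro hconv x hx
    have hmono : MonotoneOn f' D := by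
      refine (hconv.monotoneOn_deriv fun y hy ↦ (hf y hy).differentiableAt).congr ?_
      exact fun y hy ↦ (hf y hy).deriv
    exact (hf' x hx).nonneg_of_monotoneOn hDo hx hmono
  · intro hf''
    refine convexOn_of_hasDerivWithinAt2_nonneg (f' := f') (f'' := f'') hD
      (fun x hx ↦ (hf x hx).continuousAt.continuousWithinAt) ?_ ?_ ?_ <;> rw [hDo.interior_eq]
    exacts [fun x hx ↦ (hf x hx).hasDerivWithinAt, fun x hx ↦ (hf' x hx).hasDerivWithinAt, hf'']

lemma nonneg_comp_log_div_sq_iff {k : ℝ → ℝ} :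
    (∀ t ∈ Ioi (0:ℝ), 0 ≤ k (log t) / t ^ 2) ↔ ∀ x ∈ (univ : Set ℝ), 0 ≤ k x := by
  have key : ∀ t : ℝ, 0 < t → (0 ≤ k (log t) / t ^ 2 ↔ 0 ≤ k (log t)) := fun t ht ↦
    ⟨fun h ↦ by simpa [ht.ne'] using mul_nonneg h (sq_nonneg t), fun h ↦ by positivity⟩
  refine ⟨fun h x _ ↦ ?_, fun h t ht ↦ (key t ht).2 (h _ (mem_univ _))⟩
  simpa using (key _ (exp_pos x)).1 (h _ (exp_pos x))

section

variable {k : ℝ → ℝ} {f : ℝ → ℝ}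

lemma hasDerivAt_integral_comp_log_div_sq (hk : Continuous k) {t : ℝ} (ht : 0 < t) :
    HasDerivAt (fun u ↦ ∫ s in (1:ℝ)..u, k (log s) / s ^ 2) (k (log t) / t ^ 2) t := by
  have hcont : ContinuousOn (fun s ↦ k (log s) / s ^ 2) (Ioi 0) := fun s hs ↦
    ((hk.continuousAt.comp (continuousAt_log (ne_of_gt hs))).div (continuousAt_pow _ _)
      (pow_ne_zero _ (ne_of_gt hs))).continuousWithinAt
  refine intervalIntegral.integral_hasDerivAt_right ?_
    ((hcont.stronglyMeasurableAtFilter isOpen_Ioi) t ht) (hcont.continuousAt (Ioi_mem_nhds ht))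
  exact (hcont.mono fun s hs ↦ (lt_min one_pos ht).trans_le hs.1).intervalIntegrable

lemma hasDerivAt_of_eq_mul_integral (hk : Continuous k)
    (hf : ∀ t > (0:ℝ), f t = t * ∫ s in (1:ℝ)..t, k (log s) / s ^ 2) {t : ℝ} (ht : 0 < t) :
    HasDerivAt f ((∫ s in (1:ℝ)..t, k (log s) / s ^ 2) + k (log t) / t) t := by
  have hmul := (hasDerivAt_id' t).mul (hasDerivAt_integral_comp_log_div_sq hk ht)
  have heq : f =ᶠ[𝓝 t] fun u ↦ u * ∫ s in (1:ℝ)..u, k (log s) / s ^ 2 :=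
    eventually_of_mem (Ioi_mem_nhds ht) hf
  refine (hmul.congr_of_eventuallyEq heq).congr_deriv ?_
  field_simp

lemma hasDerivAt_deriv_of_eq_mul_integral (hk : Continuous k)
    (hf : ∀ t > (0:ℝ), f t = t * ∫ s in (1:ℝ)..t, k (log s) / s ^ 2) {t k' : ℝ} (ht : 0 < t)
    (hk' : HasDerivAt k k' (log t)) :
    HasDerivAt (deriv f) (k' / t ^ 2) t := by
  have hquot : HasDerivAt (fun u ↦ k (log u) / u) ((k' * t⁻¹ * t - k (log t) * 1) / t ^ 2) t :=
    (hk'.comp t (hasDerivAt_log ht.ne')).div (hasDerivAt_id t) ht.ne'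
  have hderiv : deriv f =ᶠ[𝓝 t] fun u ↦ (∫ s in (1:ℝ)..u, k (log s) / s ^ 2) + k (log u) / u :=
    eventually_of_mem (Ioi_mem_nhds ht) fun u hu ↦ (hasDerivAt_of_eq_mul_integral hk hf hu).deriv
  refine (((hasDerivAt_integral_comp_log_div_sq hk ht).add hquot).congr_of_eventuallyEq
    hderiv).congr_deriv ?_
  field_simp
  ring

end

theorem stmt_5 (g : ℝ → ℝ) (hg : ContDiff ℝ 2 g)
    (f₁ : ℝ → ℝ) (hf₁ : ∀ t > (0:ℝ), f₁ t = t * ∫ s in (1:ℝ)..t, deriv g (Real.log s) / s ^ 2) :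
    f₁ 1 = 0 ∧
    HasDerivAt f₁ (deriv g 0) 1 ∧
    (∀ t > (0:ℝ), HasDerivAt (deriv f₁) (deriv (deriv g) (Real.log t) / t ^ 2) t) ∧
    (ConvexOn ℝ (Set.Ioi (0:ℝ)) f₁ ↔ ConvexOn ℝ Set.univ g) := by
  have hg' : ContDiff ℝ 1 (deriv g) := hg.deriv'
  have hdg : Differentiable ℝ (deriv g) := hg'.differentiable one_ne_zero
  have hf₁' t (ht : 0 < t) := hasDerivAt_of_eq_mul_integral hg'.continuous hf₁ ht
  have hf₁'' : ∀ t > (0:ℝ), HasDerivAt (deriv f₁) (deriv (deriv g) (log t) / t ^ 2) t :=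
    fun t ht ↦ hasDerivAt_deriv_of_eq_mul_integral hg'.continuous hf₁ ht (hdg _).hasDerivAt
  refine ⟨by simp [hf₁ 1 one_pos], by simpa using hf₁' 1 one_pos, hf₁'', ?_⟩
  rw [convexOn_iff_hasDerivAt2_nonneg (convex_Ioi 0) isOpen_Ioi hf₁' fun t ht ↦ ?_,
    convexOn_iff_hasDerivAt2_nonneg convex_univ isOpen_univ
      (fun x _ ↦ (hg.differentiable two_ne_zero x).hasDerivAt) fun x _ ↦ (hdg x).hasDerivAt]
  · exact nonneg_comp_log_div_sq_iff
  · exact (hf₁'' t ht).congr_of_eventuallyEq <|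
      eventually_of_mem (Ioi_mem_nhds ht) fun u hu ↦ (hf₁' u hu).deriv.symm
end

section
/- Let f : ℝ → ℝ be continuously differentiable on the interval (0, ∞) with f(1) = 0, and define g : ℝ → ℝ by g(t) = f(eᵗ) − ∫_1^{eᵗ} f(s)/s ds. Then: (i) g(0) = 0; (ii) for every t ∈ ℝ, g is differentiable at t with g'(t) = eᵗ · f'(eᵗ) − f(eᵗ); and (iii) for every t > 0, t · ∫_1^t g'(log s)/s² ds = f(t). -/
/-! With `x = eᵗ`, the chain rule and the fundamental theorem of calculus give
`g'(log x) = x f'(x) - f(x)`, so `g'(log s) / s² = (f(s) / s)'` and the integral in (iii)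
telescopes to `f(t) / t - f(1) = f(t) / t`. -/

open Real Set intervalIntegral

lemma ContDiffOn.hasDerivAt_of_pos {f : ℝ → ℝ} (hf : ContDiffOn ℝ 1 f (Ioi 0)) {x : ℝ}
    (hx : 0 < x) : HasDerivAt f (deriv f x) x :=
  ((hf.differentiableOn one_ne_zero).differentiableAt (Ioi_mem_nhds hx)).hasDerivAt

lemma hasDerivAt_integral_div_id {f : ℝ → ℝ} (hf : ContinuousOn f (Ioi 0)) {a x : ℝ}
    (ha : 0 < a) (hx : 0 < x) :
    HasDerivAt (fun u => ∫ s in a..u, f s / s) (f x / x) x := by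
  have hdiv : ContinuousOn (fun s => f s / s) (Ioi 0) :=
    hf.div continuousOn_id fun s hs => (mem_Ioi.mp hs).ne'
  exact integral_hasDerivAt_right
    ((hdiv.mono (ordConnected_Ioi.uIcc_subset ha hx)).intervalIntegrable)
    (hdiv.stronglyMeasurableAtFilter isOpen_Ioi x hx)
    (hdiv.continuousAt (Ioi_mem_nhds hx))

lemma HasDerivAt.div_id {f : ℝ → ℝ} {f' x : ℝ} (hf : HasDerivAt f f' x) (hx : x ≠ 0) :
    HasDerivAt (fun s => f s / s) ((x * f' - f x) / x ^ 2) x :=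
  (hf.div (hasDerivAt_id' x) hx).congr_deriv (by ring)

lemma integral_mul_deriv_sub_div_sq {f : ℝ → ℝ} (hf : ContDiffOn ℝ 1 f (Ioi 0)) {a b : ℝ}
    (ha : 0 < a) (hb : 0 < b) :
    ∫ s in a..b, (s * deriv f s - f s) / s ^ 2 = f b / b - f a / a := by
  have hab : uIcc a b ⊆ Ioi 0 := ordConnected_Ioi.uIcc_subset ha hb
  refine integral_eq_sub_of_hasDerivAt (f := fun s => f s / s)
    (f' := fun s => (s * deriv f s - f s) / s ^ 2)
    (fun x hx => ?_) (ContinuousOn.intervalIntegrable ?_)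
  · have hx : 0 < x := hab hx
    exact (hf.hasDerivAt_of_pos hx).div_id hx.ne'
  · have hderiv : ContinuousOn (deriv f) (Ioi 0) :=
      hf.continuousOn_deriv_of_isOpen isOpen_Ioi le_rfl
    refine ContinuousOn.div ?_ (continuousOn_pow 2) fun x hx => pow_ne_zero 2 (hab hx).ne'
    exact (continuousOn_id.mul hderiv |>.sub hf.continuousOn).mono hab

theorem stmt_6 (f : ℝ → ℝ) (hf : ContDiffOn ℝ 1 f (Set.Ioi (0:ℝ))) (hf1 : f 1 = 0)
    (g : ℝ → ℝ) (hg : ∀ t : ℝ, g t = f (Real.exp t) - ∫ s in (1:ℝ)..(Real.exp t), f s / s) :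
    g 0 = 0 ∧
    (∀ t : ℝ, HasDerivAt g (Real.exp t * deriv f (Real.exp t) - f (Real.exp t)) t) ∧
    (∀ t > (0:ℝ), t * ∫ s in (1:ℝ)..t, deriv g (Real.log s) / s ^ 2 = f t) := by
  have hg_deriv : ∀ t : ℝ, HasDerivAt g (exp t * deriv f (exp t) - f (exp t)) t := by
    intro t
    rw [show g = fun t => f (exp t) - ∫ s in (1:ℝ)..exp t, f s / s from funext hg]
    refine (((hf.hasDerivAt_of_pos (exp_pos t)).sub
      (hasDerivAt_integral_div_id hf.continuousOn one_pos (exp_pos t))).comp t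
      (hasDerivAt_exp t)).congr_deriv ?_
    field_simp
  refine ⟨by simp [hg, hf1], hg_deriv, fun t ht => ?_⟩
  have hintegrand : ∫ s in (1:ℝ)..t, deriv g (log s) / s ^ 2
      = ∫ s in (1:ℝ)..t, (s * deriv f s - f s) / s ^ 2 :=
    integral_congr fun s hs => by
      simp only [(hg_deriv _).deriv, exp_log (ordConnected_Ioi.uIcc_subset one_pos ht hs)]
  rw [hintegrand, integral_mul_deriv_sub_div_sq hf one_pos ht, hf1]
  field_simp
  ring
end
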